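/- Let q be a prime power and k, m positive integers. For every F_q-linear subspace C ⊆ Mat(k×m, F_q), dim_{F_q}(C) ≤ max{k,m} · maxrk(C). Moreover, for every integer 0 ≤ D ≤ min{k,m} there exists an F_q-linear subspace C ⊆ Mat(k×m, F_q) with maxrk(C) = D and dim_{F_q}(C) = max{k,m} · D. -/

import Mathlib

open Matrix BigOperators

/-- The Gaussian (q-)binomial coefficient, defined via the q-Pascal recursion. -/
def qBinom (q : ℕ) : ℕ → ℕ → ℕ
  | _, 0 => 1
  | 0, _ + 1 => 0
  | s + 1, t + 1 => qBinom q s t + q ^ (t + 1) * qBinom q s (t + 1)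

variable {F : Type} [Field F]

/-- The dual of a rank-metric code with respect to the trace product. -/
def dualCode {k m : ℕ} (C : Submodule F (Matrix (Fin k) (Fin m) F)) :
    Submodule F (Matrix (Fin k) (Fin m) F) where
  carrier := {N | ∀ M ∈ C, Matrix.trace (M * Nᵀ) = 0}
  add_mem' := by
    intro a b ha hb M hM
    rw [Set.mem_setOf_eq] at *
    rw [Matrix.transpose_add, Matrix.mul_add, Matrix.trace_add, ha M hM, hb M hM, add_zero]
  zero_mem' := by
    intro M hM
    simp
  smul_mem' := by
    intro c N hN M hM
    rw [Set.mem_setOf_eq] at *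
    rw [Matrix.transpose_smul, Matrix.mul_smul, Matrix.trace_smul, hN M hM, smul_zero]

/-- Minimum rank of a code. -/
noncomputable def minrk {k m : ℕ} (C : Submodule F (Matrix (Fin k) (Fin m) F)) : ℕ :=
  sInf {r | ∃ M ∈ C, M ≠ 0 ∧ M.rank = r}

/-- Maximum rank of a code. -/
noncomputable def maxrk {k m : ℕ} (C : Submodule F (Matrix (Fin k) (Fin m) F)) : ℕ :=
  sSup {r | ∃ M ∈ C, M.rank = r}

/-- Rank distribution of a code. -/
noncomputable def rankDist {k m : ℕ} (C : Submodule F (Matrix (Fin k) (Fin m) F)) (i : ℕ) : ℕ :=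
  Nat.card {M : Matrix (Fin k) (Fin m) F // M ∈ C ∧ M.rank = i}

/-- MRD codes. -/
def IsMRD {k m : ℕ} (C : Submodule F (Matrix (Fin k) (Fin m) F)) : Prop :=
  C = ⊥ ∨ Module.finrank F ↥C = max k m * (min k m - minrk C + 1)

/-- Optimal anticodes. -/
def IsOptimalAnticode {k m : ℕ} (C : Submodule F (Matrix (Fin k) (Fin m) F)) : Prop :=
  Module.finrank F ↥C = max k m * maxrk C

/-- The subspace of matrices whose column space is contained in `U`. -/
def matIn {k : ℕ} (m : ℕ) (U : Submodule F (Fin k → F)) :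
    Submodule F (Matrix (Fin k) (Fin m) F) where
  carrier := {M | ∀ j, Mᵀ j ∈ U}
  add_mem' := by
    intro a b ha hb j
    rw [Matrix.transpose_add]
    exact U.add_mem (ha j) (hb j)
  zero_mem' := by
    intro j
    rw [Matrix.transpose_zero]
    exact U.zero_mem
  smul_mem' := by
    intro c M hM j
    rw [Matrix.transpose_smul]
    exact U.smul_mem c (hM j)

/-- The dual of a subspace of `Fin k → K` with respect to the standard inner product. -/
def dualPi {K : Type} [Field K] {k : ℕ} (C : Submodule K (Fin k → K)) :
    Submodule K (Fin k → K) where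
  carrier := {β | ∀ α ∈ C, ∑ i, α i * β i = 0}
  add_mem' := by
    intro a b ha hb α hα
    rw [Set.mem_setOf_eq] at *
    have : ∑ i, α i * (a + b) i = (∑ i, α i * a i) + ∑ i, α i * b i := by
      rw [← Finset.sum_add_distrib]
      exact Finset.sum_congr rfl fun i _ => by simp [mul_add]
    rw [this, ha α hα, hb α hα, add_zero]
  zero_mem' := by
    intro α hα
    simp
  smul_mem' := by
    intro c β hβ α hα
    rw [Set.mem_setOf_eq] at *
    have : ∑ i, α i * (c • β) i = c * ∑ i, α i * β i := by
      rw [Finset.mul_sum]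
      exact Finset.sum_congr rfl fun i _ => by simp [smul_eq_mul]; ring
    rw [this, hβ α hα, mul_zero]

/-- The matrix associated to a vector `α ∈ K^k` with respect to a basis `G` of `K` over `F`. -/
noncomputable def matOfBasis (F K : Type) [Field F] [Field K] [Algebra F K]
    (k m : ℕ) (G : Module.Basis (Fin m) F K) :
    (Fin k → K) →ₗ[F] Matrix (Fin k) (Fin m) F where
  toFun α := Matrix.of fun i j => G.repr (α i) j
  map_add' α β := by
    ext i j
    simp
  map_smul' c α := by
    ext i j
    simp

/-- The `h`-trace of a `k × m` matrix (`k ≤ m`). -/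
def hTrace {k m : ℕ} (hkm : k ≤ m) (h : ℕ) (M : Matrix (Fin k) (Fin m) F) : F :=
  ∑ i : Fin k, if (i : ℕ) < h then M i (Fin.castLE hkm i) else 0


/-!
By transposing we may assume `k ≤ m`. If `r = maxrk C < k`, consider the Gabidulin code: the
`k × m` matrices of `F`-coordinates of the vectors `(f(g₁), …, f(g_k))`, where `g₁, …, g_k`
are `F`-linearly independent in `K = 𝔽_{q^m}` and `f = ∑_{j < k - r} cⱼ X ^ (q ^ j)` runs over
the linearized polynomials with `c ∈ K ^ (k - r)`. It has dimension `(k - r) m`, and its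
nonzero matrices have rank `> r`, since the roots of `f` form an `F`-subspace of at most
`q ^ (k - r - 1)` elements. Hence it meets `C` trivially and `dim C + (k - r) m ≤ k m`.
Equality is attained by the matrices whose columns lie in a fixed `D`-dimensional subspace
of `F^k`.
-/

open Module

section maxrk

variable {k m : ℕ} {C : Submodule F (Matrix (Fin k) (Fin m) F)}

theorem rank_le_maxrk {M : Matrix (Fin k) (Fin m) F} (hM : M ∈ C) : M.rank ≤ maxrk C :=
  le_csSup ⟨k, by rintro _ ⟨N, -, rfl⟩; exact N.rank_le_height⟩ ⟨M, hM, rfl⟩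

theorem maxrk_le {D : ℕ} (h : ∀ M ∈ C, M.rank ≤ D) : maxrk C ≤ D :=
  csSup_le ⟨0, 0, C.zero_mem, Matrix.rank_zero⟩ (by rintro _ ⟨M, hM, rfl⟩; exact h M hM)

theorem maxrk_map_transpose (C : Submodule F (Matrix (Fin k) (Fin m) F)) :
    maxrk (C.map (transposeLinearEquiv (Fin k) (Fin m) F F).toLinearMap) = maxrk C := by
  unfold maxrk
  congr 1
  ext r
  constructor
  · rintro ⟨_, ⟨N, hN, rfl⟩, rfl⟩
    exact ⟨N, hN, (rank_transpose N).symm⟩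
  · rintro ⟨N, hN, rfl⟩
    exact ⟨Nᵀ, ⟨N, hN, rfl⟩, rank_transpose N⟩

end maxrk

section linearized

variable {K : Type*} [Fintype F] [Field K] [Algebra F K]

variable (F) in
/-- The linearized polynomial `∑ⱼ cⱼ X ^ (q ^ j)`, as an `F`-linear endomorphism of `K`. -/
noncomputable def linearizedMap {t : ℕ} (c : Fin t → K) : Module.End F K :=
  ∑ j, c j • (FiniteField.frobeniusAlgHom F K).toLinearMap ^ (j : ℕ)

theorem linearizedMap_apply {t : ℕ} (c : Fin t → K) (x : K) :
    linearizedMap F c x = ∑ j, c j * x ^ Fintype.card F ^ (j : ℕ) := by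
  simp [linearizedMap, Module.End.pow_apply, FiniteField.coe_frobeniusAlgHom, pow_iterate]

open Polynomial in
theorem finrank_ker_linearizedMap_lt [Finite K] {t : ℕ} {c : Fin t → K} (hc : c ≠ 0) :
    finrank F (LinearMap.ker (linearizedMap F c)) < t := by
  set q := Fintype.card F
  have hq : 1 < q := Fintype.one_lt_card
  obtain ⟨j₀, hj₀⟩ := Function.ne_iff.mp hc
  set P : K[X] := ∑ j, C (c j) * X ^ q ^ (j : ℕ)
  have hcoeff : P.coeff (q ^ (j₀ : ℕ)) = c j₀ := by
    rw [finsetSum_coeff, Finset.sum_eq_single j₀ (fun j _ hj => ?_) (by simp)]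
    · simp
    · rw [coeff_C_mul_X_pow, if_neg (fun h => hj (Fin.ext (Nat.pow_right_injective hq h).symm))]
  have hP : P ≠ 0 := fun h => hj₀ (by rw [← hcoeff, h, coeff_zero, Pi.zero_apply])
  have hdeg : P.natDegree ≤ q ^ (t - 1) :=
    natDegree_sum_le_of_forall_le _ _ fun j _ =>
      (natDegree_C_mul_X_pow_le _ _).trans (Nat.pow_le_pow_right hq.le (by omega))
  have hker : (LinearMap.ker (linearizedMap F c) : Set K) ⊆ P.rootSet K := fun x hx => by
    rw [mem_rootSet_of_ne hP, coe_aeval_eq_eval, eval_finsetSum]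
    simpa [linearizedMap_apply] using hx
  have hcard : q ^ finrank F (LinearMap.ker (linearizedMap F c)) ≤ q ^ (t - 1) := calc
    _ = Nat.card (LinearMap.ker (linearizedMap F c)) := by
      rw [Module.natCard_eq_pow_finrank (K := F), ← Fintype.card_eq_nat_card]
    _ = (LinearMap.ker (linearizedMap F c) : Set K).ncard := Nat.card_coe_set_eq _
    _ ≤ (P.rootSet K).ncard := Set.ncard_le_ncard hker (rootSet_finite P K)
    _ ≤ q ^ (t - 1) := (ncard_rootSet_le P K).trans hdeg
  have := (Nat.pow_le_pow_iff_right hq).mp hcard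
  have : 0 < t := j₀.pos
  omega

end linearized

theorem Submodule.finrank_le_finrank_map_add_finrank_ker {V W : Type*} [AddCommGroup V]
    [Module F V] [AddCommGroup W] [Module F W] [FiniteDimensional F V] (f : V →ₗ[F] W)
    (U : Submodule F V) : finrank F U ≤ finrank F (U.map f) + finrank F (LinearMap.ker f) := by
  have hker : (LinearMap.ker (f.domRestrict U)).map U.subtype ≤ LinearMap.ker f := by
    rintro _ ⟨x, hx, rfl⟩
    exact hx
  rw [← LinearMap.finrank_range_add_finrank_ker (f.domRestrict U), LinearMap.range_domRestrict,
    ← Submodule.finrank_map_subtype_eq]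
  exact Nat.add_le_add_left (Submodule.finrank_mono hker) _

theorem rank_matOfBasis {K : Type} [Field K] [Algebra F K] {k m : ℕ} (G : Basis (Fin m) F K)
    (α : Fin k → K) :
    (matOfBasis F K k m G α).rank = finrank F (Submodule.span F (Set.range α)) := by
  let e : K ≃ₗ[F] (Fin m → F) := G.repr.trans (Finsupp.linearEquivFunOnFinite F F (Fin m))
  have hcols : Set.range (matOfBasis F K k m G α)ᵀᵀ = e '' Set.range α := by
    rw [Matrix.transpose_transpose, ← Set.range_comp]
    rfl
  rw [← Matrix.rank_transpose, Matrix.rank_eq_finrank_span_cols, Matrix.col, hcols,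
    ← LinearEquiv.coe_coe, ← Submodule.map_span]
  exact LinearEquiv.finrank_map_eq e _

theorem lt_rank_matOfBasis_linearizedMap [Fintype F] {K : Type} [Field K] [Algebra F K]
    [Finite K] {k m t : ℕ} (G : Basis (Fin m) F K) {g : Fin k → K} (hg : LinearIndependent F g)
    {c : Fin t → K} (hc : c ≠ 0) :
    k < (matOfBasis F K k m G fun i => linearizedMap F c (g i)).rank + t := by
  have hdim := (Submodule.span F (Set.range g)).finrank_le_finrank_map_add_finrank_ker
    (linearizedMap F c)
  rw [finrank_span_eq_card hg, Fintype.card_fin, Submodule.map_span, ← Set.range_comp,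
    Function.comp_def] at hdim
  have := finrank_ker_linearizedMap_lt (F := F) hc
  rw [rank_matOfBasis]
  omega

theorem exists_submodule_finrank_eq_forall_lt_rank [Fintype F] {k m r : ℕ} (hkm : k ≤ m)
    (hrk : r < k) :
    ∃ V : Submodule F (Matrix (Fin k) (Fin m) F),
      finrank F V = (k - r) * m ∧ ∀ M ∈ V, M ≠ 0 → r < M.rank := by
  obtain ⟨p, _⟩ := CharP.exists F
  have : Fact p.Prime := ⟨CharP.char_is_prime F p⟩
  have : NeZero m := ⟨by omega⟩
  let K := FiniteField.Extension F p m
  let G : Basis (Fin m) F K := finBasisOfFinrankEq F K (FiniteField.finrank_extension F p m)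
  let g : Fin k → K := G ∘ Fin.castLE hkm
  have hg : LinearIndependent F g := G.linearIndependent.comp _ (Fin.castLE_injective hkm)
  -- the Gabidulin code: evaluations of linearized polynomials of `q`-degree `< k - r` at `g`
  let moore : Matrix (Fin k) (Fin (k - r)) K :=
    Matrix.of fun i j => g i ^ Fintype.card F ^ (j : ℕ)
  let E := matOfBasis F K k m G ∘ₗ (Matrix.mulVecLin moore).restrictScalars F
  have hE : ∀ c, c ≠ 0 → r < (E c).rank := fun c hc => by
    have hEc : E c = matOfBasis F K k m G fun i => linearizedMap F c (g i) := by
      change matOfBasis F K k m G (moore *ᵥ c) = _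
      congr 1
      funext i
      simp [moore, Matrix.mulVec, dotProduct, linearizedMap_apply, mul_comm]
    have := lt_rank_matOfBasis_linearizedMap G hg hc
    rw [hEc]
    omega
  have hE_inj : Function.Injective E := by
    refine (injective_iff_map_eq_zero E).mpr fun c hc => ?_
    by_contra hne
    simpa [hc] using hE c hne
  refine ⟨LinearMap.range E, ?_, ?_⟩
  · rw [LinearMap.finrank_range_of_inj hE_inj, Module.finrank_pi_fintype,
      FiniteField.finrank_extension]
    simp
  · rintro _ ⟨c, rfl⟩ hc
    exact hE c (by rintro rfl; exact hc (map_zero E))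

theorem finrank_add_finrank_le_of_maxrk_lt_rank {k m : ℕ}
    {C V : Submodule F (Matrix (Fin k) (Fin m) F)} (hV : ∀ M ∈ V, M ≠ 0 → maxrk C < M.rank) :
    finrank F C + finrank F V ≤ k * m := by
  have hdisj : Disjoint C V := by
    refine Submodule.disjoint_def.mpr fun M hMC hMV => ?_
    by_contra hM
    exact (hV M hMV hM).not_ge (rank_le_maxrk hMC)
  simpa [Module.finrank_matrix] using Submodule.finrank_add_finrank_le_of_disjoint hdisj

theorem finrank_le_mul_maxrk_of_le [Fintype F] {k m : ℕ} (hkm : k ≤ m)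
    (C : Submodule F (Matrix (Fin k) (Fin m) F)) : finrank F C ≤ m * maxrk C := by
  rcases le_or_gt k (maxrk C) with hk | hk
  · calc finrank F C ≤ k * m := by simpa [Module.finrank_matrix] using Submodule.finrank_le C
      _ ≤ m * maxrk C := by rw [mul_comm]; exact Nat.mul_le_mul_left m hk
  · obtain ⟨V, hV, hVrank⟩ := exists_submodule_finrank_eq_forall_lt_rank (F := F) hkm hk
    have := finrank_add_finrank_le_of_maxrk_lt_rank hVrank
    rw [hV] at this
    have : (k - maxrk C) * m + maxrk C * m = k * m := by rw [← add_mul, Nat.sub_add_cancel hk.le]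
    linarith [mul_comm m (maxrk C)]

section matIn

variable {k m : ℕ} (U : Submodule F (Fin k → F))

noncomputable def matInEquiv : matIn m U ≃ₗ[F] (Fin m → U) where
  toFun M j := ⟨(M : Matrix (Fin k) (Fin m) F)ᵀ j, M.2 j⟩
  map_add' _ _ := rfl
  map_smul' _ _ := rfl
  invFun v := ⟨Matrix.of fun i j => (v j : Fin k → F) i, fun j => (v j).2⟩
  left_inv _ := rfl
  right_inv _ := rfl

theorem finrank_matIn : finrank F (matIn m U) = m * finrank F U := by
  rw [(matInEquiv U).finrank_eq, Module.finrank_pi_fintype]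
  simp

variable {U}

theorem rank_le_finrank_of_mem_matIn {M : Matrix (Fin k) (Fin m) F} (hM : M ∈ matIn m U) :
    M.rank ≤ finrank F U := by
  rw [Matrix.rank_eq_finrank_span_cols]
  exact Submodule.finrank_mono (Submodule.span_le.mpr (Set.range_subset_iff.mpr hM))

theorem maxrk_matIn (hU : finrank F U ≤ m) : maxrk (matIn m U) = finrank F U := by
  set d := finrank F U
  let v : Fin d → Fin k → F := U.subtype ∘ Module.finBasis F U
  have hv : LinearIndependent F v :=
    (Module.finBasis F U).linearIndependent.map' U.subtype U.ker_subtype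
  let cols : Fin m → Fin k → F := fun j => if h : (j : ℕ) < d then v ⟨j, h⟩ else 0
  let M : Matrix (Fin k) (Fin m) F := Matrix.of fun i j => cols j i
  have hM : M ∈ matIn m U := fun j => by
    change cols j ∈ U
    by_cases h : (j : ℕ) < d
    · simp [cols, h, v]
    · simp [cols, h]
  refine (maxrk_le fun N hN => rank_le_finrank_of_mem_matIn hN).antisymm
    (le_trans ?_ (rank_le_maxrk hM))
  have hsub : Set.range v ⊆ Set.range Mᵀ := by
    rintro _ ⟨i, rfl⟩
    exact ⟨Fin.castLE hU i, show cols _ = _ by simp [cols]⟩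
  calc d = finrank F (Submodule.span F (Set.range v)) := by
        rw [finrank_span_eq_card hv, Fintype.card_fin]
    _ ≤ M.rank := by
        rw [Matrix.rank_eq_finrank_span_cols]
        exact Submodule.finrank_mono (Submodule.span_mono hsub)

end matIn

theorem exists_maxrk_eq_finrank_eq_of_le {k m D : ℕ} (hkm : k ≤ m) (hD : D ≤ k) :
    ∃ C : Submodule F (Matrix (Fin k) (Fin m) F), maxrk C = D ∧ finrank F C = m * D := by
  let U := Submodule.span F (Set.range (Pi.basisFun F (Fin k) ∘ Fin.castLE hD))
  have hU : finrank F U = D := by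
    rw [finrank_span_eq_card ((Pi.basisFun F (Fin k)).linearIndependent.comp _
      (Fin.castLE_injective hD)), Fintype.card_fin]
  exact ⟨matIn m U, hU ▸ maxrk_matIn (hU ▸ hD.trans hkm), hU ▸ finrank_matIn U⟩

section transpose

variable {k m : ℕ}

theorem finrank_le_max_mul_maxrk [Fintype F] (C : Submodule F (Matrix (Fin k) (Fin m) F)) :
    finrank F C ≤ max k m * maxrk C := by
  rcases le_total k m with hkm | hmk
  · rw [max_eq_right hkm]
    exact finrank_le_mul_maxrk_of_le hkm C
  · rw [max_eq_left hmk]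
    have := finrank_le_mul_maxrk_of_le hmk
      (C.map (transposeLinearEquiv (Fin k) (Fin m) F F).toLinearMap)
    rwa [maxrk_map_transpose, LinearEquiv.finrank_map_eq] at this

theorem exists_maxrk_eq_finrank_eq {D : ℕ} (hD : D ≤ min k m) :
    ∃ C : Submodule F (Matrix (Fin k) (Fin m) F), maxrk C = D ∧ finrank F C = max k m * D := by
  rcases le_total k m with hkm | hmk
  · rw [max_eq_right hkm]
    exact exists_maxrk_eq_finrank_eq_of_le hkm (hD.trans (min_le_left k m))
  · obtain ⟨C, hC, hCdim⟩ :=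
      exists_maxrk_eq_finrank_eq_of_le (F := F) hmk (hD.trans (min_le_right k m))
    refine ⟨C.map (transposeLinearEquiv (Fin m) (Fin k) F F).toLinearMap, ?_, ?_⟩
    · rw [maxrk_map_transpose, hC]
    · rw [LinearEquiv.finrank_map_eq, hCdim, max_eq_left hmk]

end transpose

theorem stmt_10_general (F : Type) [Field F] [Fintype F] (k m : ℕ) :
    (∀ C : Submodule F (Matrix (Fin k) (Fin m) F),
      Module.finrank F ↥C ≤ max k m * maxrk C) ∧
    (∀ D : ℕ, D ≤ min k m →
      ∃ C : Submodule F (Matrix (Fin k) (Fin m) F),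
        maxrk C = D ∧ Module.finrank F ↥C = max k m * D) :=
  ⟨finrank_le_max_mul_maxrk, fun _ => exists_maxrk_eq_finrank_eq⟩

/-- Anticode bound, and existence of codes attaining it. -/
theorem stmt_10 (F : Type) [Field F] [Fintype F] (k m : ℕ) (hk : 0 < k) (hm : 0 < m) :
    (∀ C : Submodule F (Matrix (Fin k) (Fin m) F),
      Module.finrank F ↥C ≤ max k m * maxrk C) ∧
    (∀ D : ℕ, D ≤ min k m →
      ∃ C : Submodule F (Matrix (Fin k) (Fin m) F),
        maxrk C = D ∧ Module.finrank F ↥C = max k m * D) :=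
  stmt_10_general F k m
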